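/- arXiv:2104.09657 — 2 statements merged into one kernel-verified Lean document; each statement's English description precedes it below -/
import Mathlib

section
/- Let K ⊆ L be fields, let D be a subring of K, and set T = K+XL[X] and R = D+XL[X]. Then R satisfies ACCP if and only if T satisfies ACCP and D is a field. -/
open Polynomial

/-- The composite `A + X B[X]`: the subring of the polynomial ring `B[X]` consisting of
polynomials whose constant coefficient lies in the subring `A`. -/
def composite {B : Type*} [CommRing B] (A : Subring B) : Subring (Polynomial B) where
  carrier := {f | f.coeff 0 ∈ A}
  mul_mem' := fun hf hg => by simpa [Polynomial.mul_coeff_zero] using A.mul_mem hf hg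
  one_mem' := by simpa using A.one_mem
  add_mem' := fun hf hg => by simpa using A.add_mem hf hg
  zero_mem' := by simpa using A.zero_mem
  neg_mem' := fun hf => by simpa using A.neg_mem hf

/-- An integral domain is atomic if every nonzero nonunit is a finite product of
irreducible elements. -/
def IsAtomicDomain (R : Type*) [CommRing R] : Prop :=
  ∀ a : R, a ≠ 0 → ¬IsUnit a →
    ∃ s : Multiset R, (∀ x ∈ s, Irreducible x) ∧ s.prod = a

/-- A ring satisfies ACCP if every ascending chain of principal ideals stabilizes. -/
def SatisfiesACCP (R : Type*) [CommRing R] : Prop :=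
  ∀ f : ℕ → Ideal R, (∀ n, (f n).IsPrincipal) → (∀ n, f n ≤ f (n + 1)) →
    ∃ N, ∀ n, N ≤ n → f n = f N

lemma mem_composite {B : Type*} [CommRing B] (A : Subring B) (f : Polynomial B) :
    f ∈ composite A ↔ f.coeff 0 ∈ A := Iff.rfl

/-- If `b ∣ a` in `composite A` with `a ≠ 0` and equal natDegrees (as polynomials),
and every nonzero element of `A` is invertible in `A`, then `a` and `b` are associated. -/
lemma assoc_of_dvd_of_deg_eq {L : Type*} [Field L] (A : Subring L)
    (hA : ∀ x : A, x ≠ 0 → ∃ y : A, x * y = 1)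
    (a b : composite A) (ha : a ≠ 0) (hdvd : b ∣ a)
    (hdeg : ((a : Polynomial L)).natDegree = ((b : Polynomial L)).natDegree) :
    Associated b a := by
  obtain ⟨c, hc⟩ := hdvd
  have hb : b ≠ 0 := by rintro rfl; simp at hc; exact ha hc
  have hcne : c ≠ 0 := by rintro rfl; simp at hc; exact ha hc
  have hcL : (a : Polynomial L) = (b : Polynomial L) * (c : Polynomial L) := by
    rw [hc]; push_cast; ring
  have hbL : (b : Polynomial L) ≠ 0 := fun h => hb (ZeroMemClass.coe_eq_zero.mp h)
  have hcLne : (c : Polynomial L) ≠ 0 := fun h => hcne (ZeroMemClass.coe_eq_zero.mp h)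
  have hdc : ((c : Polynomial L)).natDegree = 0 := by
    have := Polynomial.natDegree_mul hbL hcLne
    rw [← hcL] at this
    omega
  have hcC : (c : Polynomial L) = Polynomial.C ((c : Polynomial L).coeff 0) :=
    Polynomial.eq_C_of_natDegree_eq_zero hdc
  set e : L := (c : Polynomial L).coeff 0 with he
  have heA : e ∈ A := c.2
  have heL : e ≠ 0 := by
    intro h0
    apply hcLne
    rw [hcC, h0, map_zero]
  obtain ⟨y, hy⟩ := hA ⟨e, heA⟩ (fun h => heL (congrArg Subtype.val h))
  have hy' : e * (y : L) = 1 := by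
    have := congrArg Subtype.val hy
    simpa using this
  have hyMem : (Polynomial.C (y : L)) ∈ composite A := by
    rw [mem_composite, Polynomial.coeff_C_zero]; exact y.2
  have hunit : IsUnit c := by
    refine IsUnit.of_mul_eq_one (a := c) ⟨Polynomial.C (y : L), hyMem⟩ ?_
    apply Subtype.ext
    push_cast
    rw [hcC]
    rw [← Polynomial.C_mul, hy']
    simp
  exact ⟨hunit.unit, by rw [IsUnit.unit_spec]; exact hc.symm⟩

/-- If every nonzero element of the subring `A` of the field `L` is invertible in `A`,
then `A + X L[X]` satisfies ACCP. -/
lemma accp_composite {L : Type*} [Field L] (A : Subring L)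
    (hA : ∀ x : A, x ≠ 0 → ∃ y : A, x * y = 1) : SatisfiesACCP (composite A) := by
  intro f hp hstep
  have mono : Monotone f := monotone_nat_of_le_succ hstep
  by_cases hall : ∀ n, f n = ⊥
  · exact ⟨0, fun n _ => (hall n).trans (hall 0).symm⟩
  push_neg at hall
  obtain ⟨m, hm⟩ := hall
  choose a hagen' using fun n => (hp n).principal
  have hagen : ∀ n, f n = Ideal.span {a n} := hagen'
  have hane : ∀ n, m ≤ n → a n ≠ 0 := by
    intro n hn h0
    apply hm
    have : f n = ⊥ := by rw [hagen n, h0]; simp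
    exact le_bot_iff.mp (this ▸ mono hn)
  have hdvd : ∀ n, a (n+1) ∣ a n := by
    intro n
    rw [← Ideal.mem_span_singleton, ← hagen (n+1)]
    exact hstep n ((hagen n).symm ▸ Ideal.subset_span rfl)
  -- degrees nonincreasing for n ≥ m
  have hdegle : ∀ n, m ≤ n → ((a (n+1) : Polynomial L)).natDegree ≤ ((a n : Polynomial L)).natDegree := by
    intro n hn
    refine Polynomial.natDegree_le_of_dvd ?_ ?_
    · exact map_dvd (composite A).subtype (hdvd n)
    · exact fun h => hane n hn (ZeroMemClass.coe_eq_zero.mp h)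
  set Dg : ℕ → ℕ := fun k => ((a (m + k) : Polynomial L)).natDegree with hDg
  have hanti : ∀ k, Dg (k+1) ≤ Dg k := by
    intro k
    exact hdegle (m + k) (Nat.le_add_right m k)
  have hantiLe : ∀ i j, i ≤ j → Dg j ≤ Dg i := by
    intro i j hij
    induction j, hij using Nat.le_induction with
    | base => exact le_rfl
    | succ n hn ih => exact le_trans (hanti n) ih
  have hmem : sInf (Set.range Dg) ∈ Set.range Dg :=
    Nat.sInf_mem (Set.range_nonempty Dg)
  obtain ⟨N0, hN0⟩ := hmem
  have hconst : ∀ k, N0 ≤ k → Dg k = Dg N0 := by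
    intro k hk
    have h1 : Dg k ≤ Dg N0 := hantiLe N0 k hk
    have h2 : Dg N0 ≤ Dg k := hN0 ▸ Nat.sInf_le ⟨k, rfl⟩
    omega
  refine ⟨m + N0, fun n hn => ?_⟩
  induction n, hn using Nat.le_induction with
  | base => rfl
  | succ n hn ih =>
    rw [← ih]
    have hmn : m ≤ n := le_trans (Nat.le_add_right m N0) hn
    have hdeq : ((a n : Polynomial L)).natDegree = ((a (n+1) : Polynomial L)).natDegree := by
      obtain ⟨k, rfl⟩ := Nat.exists_eq_add_of_le hmn
      have e1 : Dg k = Dg N0 := hconst k (by omega)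
      have e2 : Dg (k+1) = Dg N0 := hconst (k+1) (by omega)
      exact e1.trans e2.symm
    have hassoc := assoc_of_dvd_of_deg_eq A hA (a n) (a (n+1)) (hane n hmn) (hdvd n) hdeq
    rw [hagen n, hagen (n+1)]
    exact Ideal.span_singleton_eq_span_singleton.mpr hassoc

/-- If `D + X L[X]` satisfies ACCP then `D` is a field. -/
theorem isField_of_accp {L : Type*} [Field L] (D : Subring L)
    (h : SatisfiesACCP (composite D)) : IsField D := by
  refine ⟨exists_pair_ne _, mul_comm, ?_⟩
  intro a ha
  by_contra hinv
  push_neg at hinv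
  set d : L := (a : L) with hd
  have hd0 : d ≠ 0 := fun h0 => ha (Subtype.ext h0)
  -- the chain of elements C (d⁻¹ ^ n) * X
  have hxmem : ∀ n : ℕ, (Polynomial.C (d⁻¹ ^ n) * X) ∈ composite D := by
    intro n
    rw [mem_composite]
    simpa using D.zero_mem
  set xs : ℕ → composite D := fun n => ⟨Polynomial.C (d⁻¹ ^ n) * X, hxmem n⟩ with hxs
  have hxne : ∀ n, (xs n : Polynomial L) ≠ 0 := by
    intro n
    simp [hxs, hd0, pow_ne_zero, X_ne_zero]
  have hdD : (Polynomial.C d) ∈ composite D := by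
    rw [mem_composite, Polynomial.coeff_C_zero]; exact a.2
  have hstep : ∀ n, xs n = xs (n+1) * ⟨Polynomial.C d, hdD⟩ := by
    intro n
    apply Subtype.ext
    push_cast
    show Polynomial.C (d⁻¹ ^ n) * X = Polynomial.C (d⁻¹ ^ (n+1)) * X * Polynomial.C d
    rw [mul_comm _ (Polynomial.C d), ← mul_assoc, ← Polynomial.C_mul]
    congr 1
    rw [pow_succ]
    field_simp
  obtain ⟨N, hN⟩ := h (fun n => Ideal.span {xs n}) (fun n => ⟨⟨xs n, rfl⟩⟩) (by
    intro n
    rw [Ideal.span_singleton_le_span_singleton]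
    exact ⟨_, hstep n⟩)
  have heq : Ideal.span {xs (N+1)} = Ideal.span {xs N} := hN (N+1) (Nat.le_succ N)
  have hassoc : Associated (xs (N+1)) (xs N) := Ideal.span_singleton_eq_span_singleton.mp heq
  obtain ⟨u, hu⟩ := hassoc
  -- coerce: C (d⁻¹^(N+1)) * X * ↑u = C (d⁻¹^N) * X
  have huL : (xs (N+1) : Polynomial L) * ((u : composite D) : Polynomial L)
      = (xs N : Polynomial L) := by
    rw [← hu]; push_cast; ring
  have hkey : ((u : composite D) : Polynomial L) = Polynomial.C d := by
    have h2 : (xs (N+1) : Polynomial L) * (Polynomial.C d) = (xs N : Polynomial L) := by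
      have := hstep N
      rw [this]; push_cast; ring
    have := huL.trans h2.symm
    exact mul_left_cancel₀ (hxne (N+1)) this
  -- now the inverse of u gives d⁻¹ ∈ D
  have huinv : ((u⁻¹ : (composite D)ˣ) : composite D) * ((u : composite D)) = 1 :=
    u.inv_mul
  have huinvL : (((u⁻¹ : (composite D)ˣ) : composite D) : Polynomial L) * Polynomial.C d = 1 := by
    rw [← hkey]
    exact_mod_cast congrArg (Subtype.val) huinv
  have hinvL : (((u⁻¹ : (composite D)ˣ) : composite D) : Polynomial L) = Polynomial.C d⁻¹ := by
    have hCd : Polynomial.C d * Polynomial.C d⁻¹ = (1 : Polynomial L) := by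
      rw [← Polynomial.C_mul, mul_inv_cancel₀ hd0, Polynomial.C_1]
    calc (((u⁻¹ : (composite D)ˣ) : composite D) : Polynomial L)
        = (((u⁻¹ : (composite D)ˣ) : composite D) : Polynomial L) * (Polynomial.C d * Polynomial.C d⁻¹) := by
          rw [hCd, mul_one]
      _ = ((((u⁻¹ : (composite D)ˣ) : composite D) : Polynomial L) * Polynomial.C d) * Polynomial.C d⁻¹ := by
          ring
      _ = Polynomial.C d⁻¹ := by rw [huinvL, one_mul]
  have hmem : (Polynomial.C d⁻¹).coeff 0 ∈ D := by
    rw [← hinvL]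
    exact ((u⁻¹ : (composite D)ˣ) : composite D).2
  rw [Polynomial.coeff_C_zero] at hmem
  exact hinv ⟨d⁻¹, hmem⟩ (Subtype.ext (by simpa using mul_inv_cancel₀ hd0))

/-- for fields `K ⊆ L` and `D` a subring of `K`, with `T = K + XL[X]` and
`R = D + XL[X]`, the ring `R` satisfies ACCP iff `T` satisfies ACCP and `D` is a field. -/
theorem stmt1 {L : Type*} [Field L] (K : Subfield L) (D : Subring L)
    (hDK : ∀ x, x ∈ D → x ∈ K) :
    SatisfiesACCP (composite D) ↔
      SatisfiesACCP (composite K.toSubring) ∧ IsField D := by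
  constructor
  · intro h
    refine ⟨accp_composite K.toSubring ?_, isField_of_accp D h⟩
    intro x hx
    have hxL : (x : L) ≠ 0 := fun h0 => hx (Subtype.ext h0)
    refine ⟨⟨(x : L)⁻¹, ?_⟩, Subtype.ext (by simpa using mul_inv_cancel₀ hxL)⟩
    exact K.inv_mem x.2
  · rintro ⟨-, hD⟩
    exact accp_composite D (fun x hx => hD.mul_inv_cancel hx)
end

section
/- Let K ⊆ L be fields, let D be a subring of K, and set T = K+XL[X] and R = D+XL[X]. Then R is a half-factorial domain (HFD) if and only if D is a field and T is an HFD. -/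
open Polynomial

/-- A half-factorial domain (HFD): atomic, and any two factorizations of the same nonzero
nonunit into irreducible elements have the same number of factors. -/
def IsHFD (R : Type*) [CommRing R] : Prop :=
  IsAtomicDomain R ∧
    ∀ a : R, a ≠ 0 → ¬IsUnit a → ∀ s t : Multiset R,
      (∀ x ∈ s, Irreducible x) → (∀ x ∈ t, Irreducible x) →
      s.prod = a → t.prod = a → Multiset.card s = Multiset.card t

section Aux

variable {L : Type*} [Field L] {A : Subring L}

lemma mem_composite_iff {f : L[X]} : f ∈ composite A ↔ f.coeff 0 ∈ A := Iff.rfl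

lemma composite_coe_ne_zero {f : composite A} (h : f ≠ 0) : (f : L[X]) ≠ 0 :=
  fun h' => h (Subtype.ext h')

lemma isUnit_val_of_isUnit {f : composite A} (h : IsUnit f) : IsUnit (f : L[X]) :=
  h.map (composite A).subtype

lemma isUnit_of_isUnit_val (hA : ∀ a ∈ A, a ≠ 0 → ∃ b ∈ A, a * b = 1)
    {f : composite A} (h : IsUnit (f : L[X])) : IsUnit f := by
  obtain ⟨c, hc, hcf⟩ := Polynomial.isUnit_iff.mp h
  have hc0 : (f : L[X]).coeff 0 = c := by rw [← hcf]; simp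
  obtain ⟨b, hbA, hb⟩ := hA c (hc0 ▸ mem_composite_iff.mp f.2) hc.ne_zero
  refine isUnit_iff_exists_inv.mpr ⟨⟨C b, by simpa [mem_composite_iff] using hbA⟩, ?_⟩
  apply Subtype.ext
  push_cast
  rw [← hcf, ← C_mul, hb, C_1]

lemma one_le_natDegree_of_nonunit (hA : ∀ a ∈ A, a ≠ 0 → ∃ b ∈ A, a * b = 1)
    {f : composite A} (h0 : f ≠ 0) (hu : ¬IsUnit f) : 1 ≤ (f : L[X]).natDegree := by
  by_contra h
  push_neg at h
  have hdeg : (f : L[X]).natDegree = 0 := by omega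
  have := Polynomial.eq_C_of_natDegree_eq_zero hdeg
  exact hu (isUnit_of_isUnit_val hA (by
    rw [this]
    exact isUnit_C.mpr (isUnit_iff_ne_zero.mpr (by
      intro hc
      exact composite_coe_ne_zero h0 (by rw [this, hc, C_0])))))

/-- Every irreducible of `composite A` (for `A` a "field" subring) has irreducible image
in `L[X]`. -/
lemma irreducible_val (hA : ∀ a ∈ A, a ≠ 0 → ∃ b ∈ A, a * b = 1)
    {p : composite A} (hp : Irreducible p) : Irreducible (p : L[X]) := by
  have hp0 : p ≠ 0 := hp.ne_zero
  have hv0 : (p : L[X]) ≠ 0 := composite_coe_ne_zero hp0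
  have hnu : ¬IsUnit (p : L[X]) := fun h => hp.not_isUnit (isUnit_of_isUnit_val hA h)
  by_cases h0 : (p : L[X]).coeff 0 = 0
  · -- p has zero constant term; show it is (unit) * X
    obtain ⟨q, hq⟩ := Polynomial.X_dvd_iff.mpr h0
    have hqu : IsUnit q := by
      by_contra hqnu
      by_cases hq0 : q.coeff 0 = 0
      · have hfac : p = (⟨X, by simpa [mem_composite_iff] using A.zero_mem⟩ : composite A) *
            ⟨q, by simpa [mem_composite_iff, hq0] using A.zero_mem⟩ := Subtype.ext hq
        rcases hp.isUnit_or_isUnit hfac with h | h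
        · exact Polynomial.not_isUnit_X (isUnit_val_of_isUnit h)
        · exact hqnu (isUnit_val_of_isUnit h)
      · set c := q.coeff 0 with hc
        have hfac : p = (⟨C c * X, by simpa [mem_composite_iff] using A.zero_mem⟩ : composite A) *
            ⟨C c⁻¹ * q, by simpa [mem_composite_iff, ← hc, inv_mul_cancel₀ hq0] using A.one_mem⟩ := by
          apply Subtype.ext
          push_cast
          rw [hq]
          rw [mul_comm (C c) X, mul_assoc, ← mul_assoc (C c), ← C_mul,
            mul_inv_cancel₀ hq0, C_1, one_mul]
        rcases hp.isUnit_or_isUnit hfac with h | h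
        · have := isUnit_val_of_isUnit h
          have hdeg : (C c * X : L[X]).natDegree = 1 := by
            rw [natDegree_C_mul hq0, natDegree_X]
          rw [Polynomial.natDegree_eq_zero_of_isUnit this] at hdeg
          omega
        · have := isUnit_val_of_isUnit h
          exact hqnu (by
            have : IsUnit (C c * (C c⁻¹ * q)) := (isUnit_C.mpr
              (isUnit_iff_ne_zero.mpr hq0)).mul this
            rwa [← mul_assoc, ← C_mul, mul_inv_cancel₀ hq0, C_1, one_mul] at this)
    obtain ⟨c, hc, hcq⟩ := Polynomial.isUnit_iff.mp hqu
    have : Associated X ((p : L[X])) := by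
      rw [hq, ← hcq]
      exact associated_mul_unit_right _ _ (isUnit_C.mpr hc)
    exact this.irreducible Polynomial.irreducible_X
  · -- nonzero constant term
    refine ⟨hnu, fun f g hfg => ?_⟩
    by_contra hcon
    push_neg at hcon
    obtain ⟨hfnu, hgnu⟩ := hcon
    have hf0 : f.coeff 0 ≠ 0 := by
      intro h
      apply h0
      rw [hfg, Polynomial.mul_coeff_zero, h, zero_mul]
    have hfac : p = (⟨C (f.coeff 0)⁻¹ * f, by
        simpa [mem_composite_iff, inv_mul_cancel₀ hf0] using A.one_mem⟩ : composite A) *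
        ⟨C (f.coeff 0) * g, by
          simpa [mem_composite_iff, ← Polynomial.mul_coeff_zero, ← hfg]
            using mem_composite_iff.mp p.2⟩ := by
      apply Subtype.ext
      push_cast
      rw [mul_comm (C (f.coeff 0)⁻¹) f, mul_assoc, ← mul_assoc (C (f.coeff 0)⁻¹),
        ← C_mul, inv_mul_cancel₀ hf0, C_1, one_mul, ← hfg]
    rcases hp.isUnit_or_isUnit hfac with h | h
    · have h' := isUnit_val_of_isUnit h
      apply hfnu
      have : IsUnit (C (f.coeff 0) * (C (f.coeff 0)⁻¹ * f)) :=
        (isUnit_C.mpr (isUnit_iff_ne_zero.mpr hf0)).mul h'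
      rwa [← mul_assoc, ← C_mul, mul_inv_cancel₀ hf0, C_1, one_mul] at this
    · have h' := isUnit_val_of_isUnit h
      apply hgnu
      have : IsUnit (C (f.coeff 0)⁻¹ * (C (f.coeff 0) * g)) :=
        (isUnit_C.mpr (isUnit_iff_ne_zero.mpr (inv_ne_zero hf0))).mul h'
      rwa [← mul_assoc, ← C_mul, inv_mul_cancel₀ hf0, C_1, one_mul] at this

lemma atomic_composite (hA : ∀ a ∈ A, a ≠ 0 → ∃ b ∈ A, a * b = 1) :
    IsAtomicDomain (composite A) := by
  suffices H : ∀ n : ℕ, ∀ f : composite A, f ≠ 0 → ¬IsUnit f → (f : L[X]).natDegree ≤ n →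
      ∃ s : Multiset (composite A), (∀ x ∈ s, Irreducible x) ∧ s.prod = f by
    intro f hf0 hfu
    exact H (f : L[X]).natDegree f hf0 hfu le_rfl
  intro n
  induction n with
  | zero =>
    intro f hf0 hfu hdeg
    exact absurd (one_le_natDegree_of_nonunit hA hf0 hfu) (by omega)
  | succ n ih =>
    intro f hf0 hfu hdeg
    by_cases hirr : Irreducible f
    · exact ⟨{f}, by simpa using hirr, by simp⟩
    · rw [irreducible_iff] at hirr
      push_neg at hirr
      obtain ⟨g, h, hgh, hgnu, hhnu⟩ := hirr hfu
      have hg0 : g ≠ 0 := by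
        rintro rfl; rw [zero_mul] at hgh; exact hf0 hgh
      have hh0 : h ≠ 0 := by
        rintro rfl; rw [mul_zero] at hgh; exact hf0 hgh
      have hval : (f : L[X]) = (g : L[X]) * (h : L[X]) := by
        rw [hgh]; push_cast; ring
      have hdegs : (g : L[X]).natDegree + (h : L[X]).natDegree = (f : L[X]).natDegree := by
        rw [hval, Polynomial.natDegree_mul (composite_coe_ne_zero hg0)
          (composite_coe_ne_zero hh0)]
      have hg1 := one_le_natDegree_of_nonunit hA hg0 hgnu
      have hh1 := one_le_natDegree_of_nonunit hA hh0 hhnu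
      obtain ⟨s, hs, hsp⟩ := ih g hg0 hgnu (by omega)
      obtain ⟨t, ht, htp⟩ := ih h hh0 hhnu (by omega)
      refine ⟨s + t, ?_, ?_⟩
      · intro x hx
        rcases Multiset.mem_add.mp hx with h | h
        · exact hs x h
        · exact ht x h
      · rw [Multiset.prod_add, hsp, htp, hgh]

lemma hfd_lengths (hA : ∀ a ∈ A, a ≠ 0 → ∃ b ∈ A, a * b = 1)
    (a : composite A) (s t : Multiset (composite A))
    (hs : ∀ x ∈ s, Irreducible x) (ht : ∀ x ∈ t, Irreducible x)
    (hsp : s.prod = a) (htp : t.prod = a) : Multiset.card s = Multiset.card t := by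
  have hs' : ∀ x ∈ s.map ((composite A).subtype), Irreducible x := by
    intro x hx
    obtain ⟨y, hy, rfl⟩ := Multiset.mem_map.mp hx
    exact irreducible_val hA (hs y hy)
  have ht' : ∀ x ∈ t.map ((composite A).subtype), Irreducible x := by
    intro x hx
    obtain ⟨y, hy, rfl⟩ := Multiset.mem_map.mp hx
    exact irreducible_val hA (ht y hy)
  have hprod : (s.map ((composite A).subtype)).prod = (t.map ((composite A).subtype)).prod := by
    rw [← map_multiset_prod, ← map_multiset_prod, hsp, htp]
  have hrel := UniqueFactorizationMonoid.factors_unique hs' ht' (hprod ▸ Associated.refl _)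
  have := Multiset.card_eq_card_of_rel hrel
  simpa using this

lemma isHFD_composite (hA : ∀ a ∈ A, a ≠ 0 → ∃ b ∈ A, a * b = 1) :
    IsHFD (composite A) :=
  ⟨atomic_composite hA, fun a _ _ s t hs ht hsp htp => hfd_lengths hA a s t hs ht hsp htp⟩

lemma isField_of_atomic (D : Subring L) (h : IsAtomicDomain (composite D)) : IsField D := by
  refine ⟨⟨0, 1, by simp [Subtype.ext_iff]⟩, mul_comm, ?_⟩
  intro a ha
  have had : (a : L) ≠ 0 := fun h' => ha (Subtype.ext h')
  set x : composite D := ⟨X, by simpa [mem_composite_iff] using D.zero_mem⟩ with hx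
  have hx0 : x ≠ 0 :=
    fun h' => Polynomial.X_ne_zero (R := L) (congrArg Subtype.val h')
  have hxu : ¬IsUnit x := fun h' => Polynomial.not_isUnit_X (isUnit_val_of_isUnit h')
  obtain ⟨s, hs, hsp⟩ := h x hx0 hxu
  -- some factor has zero constant term
  set φ : composite D →+* L := (Polynomial.constantCoeff).comp (composite D).subtype with hφ
  have h0 : (s.map φ).prod = 0 := by
    rw [← map_multiset_prod, hsp]
    simp [hφ, hx]
  obtain ⟨z, hz, hz0⟩ : ∃ z ∈ s, φ z = 0 := by
    rcases Multiset.prod_eq_zero_iff.mp h0 with h'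
    obtain ⟨y, hy, hy0⟩ := Multiset.mem_map.mp h'
    exact ⟨y, hy, hy0⟩
  have hzirr := hs z hz
  have hzdvd : (z : L[X]) ∣ X := by
    have : z ∣ x := hsp ▸ Multiset.dvd_prod hz
    obtain ⟨w, hw⟩ := this
    exact ⟨w, by rw [← Subring.coe_mul, ← hw]⟩
  have hXdvd : X ∣ (z : L[X]) := Polynomial.X_dvd_iff.mpr (by
    simpa [hφ] using hz0)
  have hass := associated_of_dvd_dvd hXdvd hzdvd
  obtain ⟨u, hu⟩ := hass
  obtain ⟨c, hc, hcu⟩ := Polynomial.isUnit_iff.mp u.isUnit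
  have hzval : (z : L[X]) = X * C c := by rw [← hu, hcu]
  have hc0 : c ≠ 0 := hc.ne_zero
  -- now factor z = (C a) * (C (a⁻¹ c) * X)
  have hfac : z = (⟨C (a : L), by simpa [mem_composite_iff] using a.2⟩ : composite D) *
      ⟨C ((a : L)⁻¹ * c) * X, by simpa [mem_composite_iff] using D.zero_mem⟩ := by
    apply Subtype.ext
    push_cast
    rw [hzval, ← mul_assoc, ← C_mul, ← mul_assoc, mul_inv_cancel₀ had, one_mul, mul_comm X]
  rcases hzirr.isUnit_or_isUnit hfac with hun | hun
  · obtain ⟨b, hb⟩ := isUnit_iff_exists_inv.mp hun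
    have hb' : (C (a : L)) * (b : L[X]) = 1 := by
      have := congrArg (Subtype.val) hb
      push_cast at this
      exact this
    have : (a : L) * (b : L[X]).coeff 0 = 1 := by
      have := congrArg (fun p => Polynomial.coeff p 0) hb'
      simpa using this
    exact ⟨⟨(b : L[X]).coeff 0, mem_composite_iff.mp b.2⟩, Subtype.ext this⟩
  · exfalso
    have h' := isUnit_val_of_isUnit hun
    have hdeg : (C ((a : L)⁻¹ * c) * X : L[X]).natDegree = 1 := by
      rw [natDegree_C_mul (by
        exact mul_ne_zero (inv_ne_zero had) hc0), natDegree_X]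
    rw [Polynomial.natDegree_eq_zero_of_isUnit h'] at hdeg
    omega

end Aux

/-- for fields `K ⊆ L` and `D` a subring of `K`, with `T = K + XL[X]` and
`R = D + XL[X]`, the ring `R` is an HFD iff `D` is a field and `T` is an HFD. -/
theorem stmt4 {L : Type*} [Field L] (K : Subfield L) (D : Subring L)
    (hDK : ∀ x, x ∈ D → x ∈ K) :
    IsHFD (composite D) ↔ IsField D ∧ IsHFD (composite K.toSubring) := by
  have hK : ∀ a ∈ K.toSubring, a ≠ 0 → ∃ b ∈ K.toSubring, a * b = 1 := by
    intro a haK ha0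
    exact ⟨a⁻¹, K.inv_mem haK, mul_inv_cancel₀ ha0⟩
  constructor
  · intro hR
    exact ⟨isField_of_atomic D hR.1, isHFD_composite hK⟩
  · rintro ⟨hD, -⟩
    apply isHFD_composite
    intro a haD ha0
    obtain ⟨b, hb⟩ := hD.mul_inv_cancel (a := ⟨a, haD⟩) (by simpa [Subtype.ext_iff] using ha0)
    have hb' := congrArg Subtype.val hb
    push_cast at hb'
    exact ⟨(b : L), b.2, hb'⟩
end
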